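/- arXiv:2605.26160 — 10 statements merged into one kernel-verified Lean document; each statement's English description precedes it below -/
import Mathlib

section
/- Let R be a commutative ring, a, b ∈ R, and s a regular element. Then a is complemented with complement b if and only if s·a is complemented with complement b (i.e., ab = 0 and a + b regular iff (sa)b = 0 and sa + b regular). -/
/-!
When `a * b = 0`, the sum `a + b` is regular exactly when no nonzero element annihilates both
`a` and `b`. Multiplying `a` by a regular `s` changes neither `a * b = 0` nor the annihilator of
`a`, so both sides of the equivalence describe the same condition.
-/

open scoped nonZeroDivisors

section

variable {R : Type*} [CommRing R]

theorem add_mem_nonZeroDivisors_iff_of_mul_eq_zero {a b : R} (hab : a * b = 0) :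
    a + b ∈ R⁰ ↔ ∀ x, x * a = 0 → x * b = 0 → x = 0 := by
  rw [mem_nonZeroDivisors_iff_right]
  refine ⟨fun hreg x hxa hxb => hreg x (by rw [mul_add, hxa, hxb, add_zero]), fun hann x hx => ?_⟩
  -- `y = x * a` kills `b` because `a * b = 0`, and kills `a` because `x * a = - x * b`.
  have hxa : x * a = 0 := hann (x * a) (by linear_combination a * hx - x * hab)
    (by rw [mul_assoc, hab, mul_zero])
  exact hann x hxa (by linear_combination hx - hxa)

theorem mul_mul_left_mem_nonZeroDivisors_eq_zero_iff {s : R} (hs : s ∈ R⁰) (x a : R) :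
    x * (s * a) = 0 ↔ x * a = 0 := by
  rw [mul_left_comm, mul_comm, mul_right_mem_nonZeroDivisors_eq_zero_iff hs]

end

theorem complemented_iff_smul_regular_general {R : Type*} [CommRing R]
    (a b s : R) (hs : s ∈ nonZeroDivisors R) :
    (a * b = 0 ∧ a + b ∈ nonZeroDivisors R) ↔
      ((s * a) * b = 0 ∧ s * a + b ∈ nonZeroDivisors R) := by
  have hsab : s * a * b = 0 ↔ a * b = 0 := by
    rw [mul_comm, mul_mul_left_mem_nonZeroDivisors_eq_zero_iff hs, mul_comm]
  rw [hsab]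
  refine and_congr_right fun hab => ?_
  have hsab' : s * a * b = 0 := hsab.mpr hab
  simp only [add_mem_nonZeroDivisors_iff_of_mul_eq_zero hab,
    add_mem_nonZeroDivisors_iff_of_mul_eq_zero hsab',
    mul_mul_left_mem_nonZeroDivisors_eq_zero_iff hs]

theorem complemented_iff_smul_regular {R : Type*} [CommRing R] [Nontrivial R]
    (a b s : R) (hs : s ∈ nonZeroDivisors R) :
    (a * b = 0 ∧ a + b ∈ nonZeroDivisors R) ↔
      ((s * a) * b = 0 ∧ s * a + b ∈ nonZeroDivisors R) :=
  complemented_iff_smul_regular_general a b s hs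
end

section
/- Let R be a commutative ring, let b be a complement of a (ab = 0 and a + b regular), and suppose bb' is nilpotent and a + bb' is complemented. Then bb' = 0. -/
/-!
Put `x = b * b'` and let `z` complement `a + x`. Since `a * b = 0`, multiplying
`(a + x) * z = 0` by `a` gives `a ^ 2 * z = 0`, and then `(a + b) * (a * z) = 0` forces
`a * z = 0` because `a + b` is regular; hence `x * z = 0`. Together with `x * a = 0` this
makes `s = a + x + z` act on `x` as `x` itself: `x * s = x * x`, so `x * s ^ n = x ^ (n + 1)`.
For `n` with `x ^ (n + 1) = 0`, regularity of `s ^ n` gives `x = 0`.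
-/

open scoped nonZeroDivisors

theorem mul_pow_eq_pow_succ_of_mul_eq_mul_self {M : Type*} [Monoid M] {x s : M}
    (h : x * s = x * x) (n : ℕ) : x * s ^ n = x ^ (n + 1) := by
  induction n with
  | zero => simp
  | succ n ih =>
    rw [pow_succ s, ← mul_assoc, ih, pow_succ x n, mul_assoc, h, ← mul_assoc, ← pow_succ,
      ← pow_succ]

theorem IsNilpotent.eq_zero_of_mul_mem_nonZeroDivisors_eq_mul_self {M₀ : Type*}
    [MonoidWithZero M₀] {x s : M₀} (hx : IsNilpotent x) (hs : s ∈ M₀⁰) (h : x * s = x * x) :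
    x = 0 := by
  obtain ⟨n, hn⟩ := hx
  have hxs : x * s ^ n = 0 := by
    rw [mul_pow_eq_pow_succ_of_mul_eq_mul_self h, _root_.pow_succ, hn, zero_mul]
  exact (mul_right_mem_nonZeroDivisors_eq_zero_iff (pow_mem hs n)).1 hxs

theorem mul_eq_zero_of_mul_self_mul_eq_zero {R : Type*} [CommRing R] {a b y : R}
    (hab : a * b = 0) (hreg : a + b ∈ R⁰) (h : a * a * y = 0) : a * y = 0 :=
  (mul_right_mem_nonZeroDivisors_eq_zero_iff hreg).1 <| by
    linear_combination h + y * hab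

theorem nilpotent_perturbation_complemented_eq_zero_general {R : Type*} [CommRing R]
    (a b b' : R) (hab : a * b = 0) (hreg : a + b ∈ nonZeroDivisors R)
    (hnil : IsNilpotent (b * b'))
    (hcompl : ∃ z : R, (a + b * b') * z = 0 ∧ a + b * b' + z ∈ nonZeroDivisors R) :
    b * b' = 0 := by
  obtain ⟨z, hz, hs⟩ := hcompl
  have haz : a * z = 0 :=
    mul_eq_zero_of_mul_self_mul_eq_zero hab hreg <| by
      linear_combination a * hz - b' * z * hab
  refine hnil.eq_zero_of_mul_mem_nonZeroDivisors_eq_mul_self hs ?_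
  linear_combination b' * hab + hz - haz

theorem nilpotent_perturbation_complemented_eq_zero {R : Type*} [CommRing R] [Nontrivial R]
    (a b b' : R) (hab : a * b = 0) (hreg : a + b ∈ nonZeroDivisors R)
    (hnil : IsNilpotent (b * b'))
    (hcompl : ∃ z : R, (a + b * b') * z = 0 ∧ a + b * b' + z ∈ nonZeroDivisors R) :
    b * b' = 0 :=
  nilpotent_perturbation_complemented_eq_zero_general a b b' hab hreg hnil hcompl
end

section
/- If R is a semi-complemented commutative ring (every non-nilpotent element is complemented), then R is almost complemented: R modulo its nilradical is a complemented ring. -/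
/-!
A nilpotent element becomes `0` in `R ⧸ nilradical R`, and `0` is complemented by `1`. A
non-nilpotent element has a complement in `R`, and its image stays a complement, because a
non-zero-divisor `s` of `R` stays one modulo the nilradical: `(s * r) ^ n = s ^ n * r ^ n = 0`
forces `r ^ n = 0`.
-/

open nonZeroDivisors

namespace Ring

variable {R : Type*} [CommRing R]

def IsComplemented (x : R) : Prop :=
  ∃ y : R, x * y = 0 ∧ x + y ∈ R⁰

theorem isComplemented_zero : IsComplemented (0 : R) :=
  ⟨1, zero_mul 1, by simpa only [zero_add] using one_mem R⁰⟩

theorem mk_nilradical_mem_nonZeroDivisors {s : R} (hs : s ∈ R⁰) :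
    Ideal.Quotient.mk (nilradical R) s ∈ (R ⧸ nilradical R)⁰ := by
  rw [mem_nonZeroDivisors_iff_right]
  intro z hz
  obtain ⟨r, rfl⟩ := Ideal.Quotient.mk_surjective z
  rw [Ideal.Quotient.eq_zero_iff_mem, mem_nilradical]
  rwa [← map_mul, Ideal.Quotient.eq_zero_iff_mem, mem_nilradical, mul_comm,
    (Commute.all s r).isNilpotent_mul_left_iff (mem_nonZeroDivisors_iff'.mp hs).1] at hz

theorem IsComplemented.mk_nilradical {x : R} (hx : IsComplemented x) :
    IsComplemented (Ideal.Quotient.mk (nilradical R) x) := by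
  obtain ⟨y, hxy, hsum⟩ := hx
  refine ⟨Ideal.Quotient.mk _ y, ?_, ?_⟩
  · rw [← map_mul, hxy, map_zero]
  · rw [← map_add]
    exact mk_nilradical_mem_nonZeroDivisors hsum

end Ring

theorem semiComplemented_implies_almostComplemented_general {R : Type*} [CommRing R]
    (h : ∀ x : R, ¬ IsNilpotent x → ∃ y : R, x * y = 0 ∧ x + y ∈ nonZeroDivisors R) :
    ∀ a : R ⧸ nilradical R, ∃ b : R ⧸ nilradical R,
      a * b = 0 ∧ a + b ∈ nonZeroDivisors (R ⧸ nilradical R) := by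
  intro a
  obtain ⟨x, rfl⟩ := Ideal.Quotient.mk_surjective a
  by_cases hx : IsNilpotent x
  · rw [Ideal.Quotient.eq_zero_iff_mem.mpr hx]
    exact Ring.isComplemented_zero
  · exact Ring.IsComplemented.mk_nilradical (h x hx)

theorem semiComplemented_implies_almostComplemented {R : Type*} [CommRing R] [Nontrivial R]
    (h : ∀ x : R, ¬ IsNilpotent x → ∃ y : R, x * y = 0 ∧ x + y ∈ nonZeroDivisors R) :
    ∀ a : R ⧸ nilradical R, ∃ b : R ⧸ nilradical R,
      a * b = 0 ∧ a + b ∈ nonZeroDivisors (R ⧸ nilradical R) :=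
  semiComplemented_implies_almostComplemented_general h
end

section
/- An element a of a commutative ring R is π-complemented (some power of a is complemented) if and only if there exists b ∈ R with ab nilpotent and a + b regular. -/
/-!
Write `J z` for the radical of the annihilator of `z`. An element `r` is regular exactly when
`r ∈ J z` forces `z = 0`, so it suffices to compare memberships in the radical ideal `J z`.
If `u * v` is nilpotent it lies in every `J z`, and in a radical ideal containing `u * v`,
`u + v` belongs to it iff both `u` and `v` do (since `u ^ 2 = u * (u + v) - u * v`); the same
holds for `u ^ m` and `v ^ n`. Hence `u + v` is regular iff `u ^ m + v ^ n` is, which turns a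
complement `y` of `a ^ n` into the element `b = y`, and `b` into the complement `b ^ m` of `a ^ m`.
-/

namespace Ideal

variable {R : Type*} [CommRing R] {I : Ideal R} {x y : R}

theorem IsRadical.pow_mem_iff (hI : I.IsRadical) {n : ℕ} (hn : n ≠ 0) : x ^ n ∈ I ↔ x ∈ I :=
  ⟨fun h => hI ⟨n, h⟩, fun h => I.pow_mem_of_mem h n (Nat.pos_of_ne_zero hn)⟩

theorem IsRadical.mem_of_add_mem_of_mul_mem (hI : I.IsRadical) (hadd : x + y ∈ I)
    (hmul : x * y ∈ I) : x ∈ I :=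
  hI ⟨2, by
    rw [show x ^ 2 = x * (x + y) - x * y by ring]
    exact I.sub_mem (I.mul_mem_left x hadd) hmul⟩

theorem IsRadical.add_mem_iff_of_mul_mem (hI : I.IsRadical) (hmul : x * y ∈ I) :
    x + y ∈ I ↔ x ∈ I ∧ y ∈ I :=
  ⟨fun h => ⟨hI.mem_of_add_mem_of_mul_mem h hmul,
      hI.mem_of_add_mem_of_mul_mem (add_comm x y ▸ h) (mul_comm x y ▸ hmul)⟩,
    fun h => I.add_mem h.1 h.2⟩

theorem IsRadical.pow_add_pow_mem_iff (hI : I.IsRadical) (hmul : x * y ∈ I) {m n : ℕ}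
    (hm : m ≠ 0) (hn : n ≠ 0) : x ^ m + y ^ n ∈ I ↔ x + y ∈ I := by
  have hpow : x ^ m * y ^ n ∈ I := by
    obtain ⟨m, rfl⟩ := Nat.exists_eq_succ_of_ne_zero hm
    obtain ⟨n, rfl⟩ := Nat.exists_eq_succ_of_ne_zero hn
    rw [show x ^ (m + 1) * y ^ (n + 1) = x ^ m * y ^ n * (x * y) by ring]
    exact I.mul_mem_left _ hmul
  rw [hI.add_mem_iff_of_mul_mem hpow, hI.add_mem_iff_of_mul_mem hmul, hI.pow_mem_iff hm,
    hI.pow_mem_iff hn]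

theorem mem_radical_of_isNilpotent (hx : IsNilpotent x) : x ∈ I.radical :=
  let ⟨k, hk⟩ := hx
  ⟨k, hk ▸ I.zero_mem⟩

end Ideal

section NonZeroDivisors

open Ideal

variable {R : Type*} [CommRing R]

theorem mem_nonZeroDivisors_iff_forall_mem_radical_annihilator {r : R} :
    r ∈ nonZeroDivisors R ↔ ∀ z : R, r ∈ (Submodule.annihilator (span {z})).radical → z = 0 := by
  simp only [mem_nonZeroDivisors_iff_right]
  constructor
  · rintro hr z ⟨k, hk⟩
    rw [Submodule.mem_annihilator_span_singleton, smul_eq_mul, mul_comm] at hk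
    exact (mem_nonZeroDivisors_iff_right.1 (pow_mem (mem_nonZeroDivisors_iff_right.2 hr) k)) z hk
  · intro hr z hz
    refine hr z (le_radical ?_)
    rwa [Submodule.mem_annihilator_span_singleton, smul_eq_mul, mul_comm]

theorem pow_add_pow_mem_nonZeroDivisors_iff {u v : R} (h : IsNilpotent (u * v)) {m n : ℕ}
    (hm : m ≠ 0) (hn : n ≠ 0) :
    u ^ m + v ^ n ∈ nonZeroDivisors R ↔ u + v ∈ nonZeroDivisors R := by
  simp only [mem_nonZeroDivisors_iff_forall_mem_radical_annihilator]
  refine forall_congr' fun z => ?_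
  rw [(radical_isRadical _).pow_add_pow_mem_iff (mem_radical_of_isNilpotent h) hm hn]

end NonZeroDivisors

theorem pi_complemented_iff_general {R : Type*} [CommRing R] (a : R) :
    (∃ n : ℕ, 1 ≤ n ∧ ∃ y : R, a ^ n * y = 0 ∧ a ^ n + y ∈ nonZeroDivisors R) ↔
      (∃ b : R, IsNilpotent (a * b) ∧ a + b ∈ nonZeroDivisors R) := by
  constructor
  · rintro ⟨n, hn, y, hy, hreg⟩
    replace hn : n ≠ 0 := Nat.one_le_iff_ne_zero.1 hn
    have hnil : IsNilpotent (a * y) :=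
      ⟨n, by
        rw [mul_pow]
        exact eq_zero_of_zero_dvd (hy ▸ mul_dvd_mul_left _ (dvd_pow_self y hn))⟩
    refine ⟨y, hnil, (pow_add_pow_mem_nonZeroDivisors_iff hnil hn one_ne_zero).1 ?_⟩
    rwa [pow_one]
  · rintro ⟨b, ⟨m, hm⟩, hreg⟩
    refine ⟨m + 1, Nat.le_add_left 1 m, b ^ (m + 1), by rw [← mul_pow, pow_succ, hm, zero_mul], ?_⟩
    exact (pow_add_pow_mem_nonZeroDivisors_iff ⟨m, hm⟩ m.succ_ne_zero m.succ_ne_zero).2 hreg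

theorem pi_complemented_iff {R : Type*} [CommRing R] [Nontrivial R] (a : R) :
    (∃ n : ℕ, 1 ≤ n ∧ ∃ y : R, a ^ n * y = 0 ∧ a ^ n + y ∈ nonZeroDivisors R) ↔
      (∃ b : R, IsNilpotent (a * b) ∧ a + b ∈ nonZeroDivisors R) :=
  pi_complemented_iff_general a
end

section
/- Let R be a commutative ring. An element a ∈ R is regular if and only if a is aregular (xa nilpotent implies x nilpotent) and a is complemented (there is b with ab = 0 and a + b regular). -/
/-!
Regular elements cancel from `(a * x) ^ n = a ^ n * x ^ n = 0`, and `b = 0` complements them.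
Conversely, `a * b = 0` is nilpotent, so `b` is nilpotent by aregularity, and `a = (a + b) - b`
is a regular element plus a nilpotent one, hence regular.
-/

theorem add_pow_mul_eq_pow_mul_of_mul_eq_zero {R : Type*} [CommSemiring R] {a b x : R}
    (h : a * x = 0) (k : ℕ) : (a + b) ^ k * x = b ^ k * x := by
  induction k with
  | zero => simp
  | succ k ih =>
    calc (a + b) ^ (k + 1) * x = (a + b) * ((a + b) ^ k * x) := by ring
      _ = b ^ k * (a * x) + b ^ (k + 1) * x := by rw [ih]; ring
      _ = b ^ (k + 1) * x := by rw [h, mul_zero, zero_add]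

theorem add_mem_nonZeroDivisors_of_isNilpotent {R : Type*} [CommRing R] {c n : R}
    (hc : c ∈ nonZeroDivisors R) (hn : IsNilpotent n) : c + n ∈ nonZeroDivisors R := by
  obtain ⟨m, hm⟩ := hn.neg
  refine mem_nonZeroDivisors_iff_left.mpr fun x hx => ?_
  have hcx : c ^ m * x = 0 := by
    rw [← add_neg_cancel_right c n, add_pow_mul_eq_pow_mul_of_mul_eq_zero hx, hm, zero_mul]
  exact mem_nonZeroDivisors_iff_left.mp (pow_mem hc m) x hcx

theorem regular_iff_aregular_and_complemented_general {R : Type*} [CommRing R] (a : R) :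
    a ∈ nonZeroDivisors R ↔
      ((∀ x : R, IsNilpotent (a * x) → IsNilpotent x) ∧
        ∃ b : R, a * b = 0 ∧ a + b ∈ nonZeroDivisors R) := by
  constructor
  · intro ha
    have ha' : a ∈ nonZeroDivisorsLeft R := by rwa [nonZeroDivisorsLeft_eq_nonZeroDivisors]
    exact ⟨fun x => ((Commute.all a x).isNilpotent_mul_left_iff ha').mp, 0, mul_zero a,
      by rwa [add_zero]⟩
  · rintro ⟨haregular, b, hab, hreg⟩
    have hb : IsNilpotent b := haregular b (hab ▸ IsNilpotent.zero)
    simpa using add_mem_nonZeroDivisors_of_isNilpotent hreg hb.neg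

theorem regular_iff_aregular_and_complemented {R : Type*} [CommRing R] [Nontrivial R] (a : R) :
    a ∈ nonZeroDivisors R ↔
      ((∀ x : R, IsNilpotent (a * x) → IsNilpotent x) ∧
        ∃ b : R, a * b = 0 ∧ a + b ∈ nonZeroDivisors R) :=
  regular_iff_aregular_and_complemented_general a
end

section
/- A commutative ring R is semi-complemented if and only if either every non-nilpotent element of R is regular (Property D) or R is complemented (reduced and every element is complemented). -/
/-!
Suppose every non-nilpotent element is complemented but some non-nilpotent `a` is a zero
divisor, and let `y` be a complement of `a`. Then `y` is not nilpotent either, since a regular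
element plus a nilpotent one stays regular. If `n² = 0`, complementing the non-nilpotent
elements `a + n y` and `y + n a` shows `n y² = n a² = 0`, hence `n (a + y)² = 0` and `n = 0`.
So `R` is reduced; its only nilpotent element `0` is complemented by `1`.
-/

open nonZeroDivisors

namespace Ring

variable {R : Type*} [CommRing R]

theorem isComplemented_of_mem_nonZeroDivisors {x : R} (hx : x ∈ R⁰) : IsComplemented x :=
  ⟨0, mul_zero x, by rwa [add_zero]⟩

theorem add_mem_nonZeroDivisors_of_isNilpotent {r n : R} (hr : r ∈ R⁰) (hn : IsNilpotent n) :
    r + n ∈ R⁰ := by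
  obtain ⟨k, hk⟩ := hn
  refine mem_nonZeroDivisors_iff_right.mpr fun z hz ↦ ?_
  have hpow : ∀ m : ℕ, z * r ^ m = z * (-n) ^ m := by
    intro m
    induction m with
    | zero => simp only [pow_zero]
    | succ m ih => linear_combination r * ih + (-n) ^ m * hz
  have hzk : z * r ^ k = 0 := by rw [hpow, neg_pow, hk, mul_zero, mul_zero]
  exact (mul_right_mem_nonZeroDivisors_eq_zero_iff (pow_mem hr k)).mp hzk

theorem mul_sq_eq_zero_of_mul_self_eq_zero
    (hsc : ∀ x : R, ¬IsNilpotent x → IsComplemented x) {x c n : R} (hx : ¬IsNilpotent x)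
    (hxc : x * c = 0) (hn : n * n = 0) : n * c ^ 2 = 0 := by
  have hnc : IsNilpotent (n * c) := ⟨2, by linear_combination c ^ 2 * hn⟩
  have hx' : ¬IsNilpotent (x + n * c) := fun h ↦
    hx (by simpa using (Commute.all _ _).isNilpotent_sub h hnc)
  obtain ⟨z, hz, ht⟩ := hsc _ hx'
  refine (mul_right_mem_nonZeroDivisors_eq_zero_iff ht).mp ?_
  linear_combination (n * c - z) * hxc + c ^ 3 * hn + c * hz

theorem eq_zero_of_mul_self_eq_zero_of_complement
    (hsc : ∀ x : R, ¬IsNilpotent x → IsComplemented x) {a y n : R} (ha : ¬IsNilpotent a)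
    (hy : ¬IsNilpotent y) (hay : a * y = 0) (hr : a + y ∈ R⁰) (hn : n * n = 0) : n = 0 := by
  have hny : n * y ^ 2 = 0 := mul_sq_eq_zero_of_mul_self_eq_zero hsc ha hay hn
  have hna : n * a ^ 2 = 0 :=
    mul_sq_eq_zero_of_mul_self_eq_zero hsc hy (by rw [mul_comm, hay]) hn
  refine (mul_right_mem_nonZeroDivisors_eq_zero_iff (pow_mem hr 2)).mp ?_
  linear_combination hna + hny + 2 * n * hay

theorem isReduced_of_not_isNilpotent_of_notMem_nonZeroDivisors
    (hsc : ∀ x : R, ¬IsNilpotent x → IsComplemented x) {a : R} (ha : ¬IsNilpotent a)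
    (ha' : a ∉ R⁰) : IsReduced R := by
  obtain ⟨y, hay, hr⟩ := hsc a ha
  have hy : ¬IsNilpotent y := fun hy ↦
    ha' (by simpa using add_mem_nonZeroDivisors_of_isNilpotent hr hy.neg)
  refine (isReduced_iff_pow_one_lt 2 one_lt_two).mpr fun n hn ↦ ?_
  exact eq_zero_of_mul_self_eq_zero_of_complement hsc ha hy hay hr (by rwa [← sq])

end Ring

theorem semiComplemented_iff_propD_or_complemented_general {R : Type*} [CommRing R] :
    (∀ x : R, ¬ IsNilpotent x → ∃ y : R, x * y = 0 ∧ x + y ∈ nonZeroDivisors R) ↔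
      ((∀ x : R, IsNilpotent x ∨ x ∈ nonZeroDivisors R) ∨
        (∀ x : R, ∃ y : R, x * y = 0 ∧ x + y ∈ nonZeroDivisors R)) := by
  constructor
  · intro hsc
    by_cases hD : ∀ x : R, IsNilpotent x ∨ x ∈ R⁰
    · exact Or.inl hD
    push Not at hD
    obtain ⟨a, ha, ha'⟩ := hD
    have := Ring.isReduced_of_not_isNilpotent_of_notMem_nonZeroDivisors hsc ha ha'
    refine Or.inr fun x ↦ ?_
    by_cases hx : IsNilpotent x
    · rw [hx.eq_zero]
      exact Ring.isComplemented_zero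
    · exact hsc x hx
  · rintro (hD | hC) x hx
    · exact Ring.isComplemented_of_mem_nonZeroDivisors ((hD x).resolve_left hx)
    · exact hC x

theorem semiComplemented_iff_propD_or_complemented {R : Type*} [CommRing R] [Nontrivial R] :
    (∀ x : R, ¬ IsNilpotent x → ∃ y : R, x * y = 0 ∧ x + y ∈ nonZeroDivisors R) ↔
      ((∀ x : R, IsNilpotent x ∨ x ∈ nonZeroDivisors R) ∨
        (∀ x : R, ∃ y : R, x * y = 0 ∧ x + y ∈ nonZeroDivisors R)) :=
  semiComplemented_iff_propD_or_complemented_general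
end

section
/- Let R be a commutative ring satisfying Property D (every element is nilpotent or regular). Then the polynomial ring R[x] satisfies Property D. -/
theorem polynomial_propertyD_general {R : Type*} [CommRing R]
    (h : ∀ a : R, IsNilpotent a ∨ a ∈ nonZeroDivisors R) :
    ∀ f : Polynomial R, IsNilpotent f ∨ f ∈ nonZeroDivisors (Polynomial R) := by
  intro f
  rw [Polynomial.isNilpotent_iff, or_iff_not_imp_left, not_forall]
  rintro ⟨n, hn⟩
  exact Polynomial.mem_nonzeroDivisors_of_coeff_mem n ((h (f.coeff n)).resolve_left hn)

theorem polynomial_propertyD {R : Type*} [CommRing R] [Nontrivial R]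
    (h : ∀ a : R, IsNilpotent a ∨ a ∈ nonZeroDivisors R) :
    ∀ f : Polynomial R, IsNilpotent f ∨ f ∈ nonZeroDivisors (Polynomial R) :=
  polynomial_propertyD_general h
end

section
/- Let R be a reduced commutative ring and f ∈ R[[x]] a power series. Then f is a regular element of R[[x]] if and only if the ideal generated by the coefficients of f has zero annihilator in R. -/
/-!
Over a reduced ring, `f * g = 0` in `R⟦X⟧` forces every product of a coefficient of `f` with a
coefficient of `g` to vanish: modulo each prime `P` the power series ring over `R ⧸ P` is a
domain, so the product lies in every prime ideal, i.e. in the nilradical, which is zero. Hence the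
coefficients of a zero divisor `g` of `f` all annihilate the content of `f`, and conversely a
constant `r` annihilating the content kills `f`.
-/

open scoped nonZeroDivisors

namespace PowerSeries

variable {R : Type*} [CommRing R]

theorem coeff_mul_coeff_mem_of_mul_eq_zero {f g : R⟦X⟧} (h : f * g = 0) (P : Ideal R) [P.IsPrime]
    (i j : ℕ) : coeff i f * coeff j g ∈ P := by
  have hfg : map (Ideal.Quotient.mk P) f * map (Ideal.Quotient.mk P) g = 0 := by
    rw [← map_mul, h, map_zero]
  rcases mul_eq_zero.mp hfg with hf | hg
  · refine P.mul_mem_right _ (Ideal.Quotient.eq_zero_iff_mem.mp ?_)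
    simpa using congr(coeff i $hf)
  · refine P.mul_mem_left _ (Ideal.Quotient.eq_zero_iff_mem.mp ?_)
    simpa using congr(coeff j $hg)

theorem coeff_mul_coeff_eq_zero_of_mul_eq_zero [IsReduced R] {f g : R⟦X⟧} (h : f * g = 0)
    (i j : ℕ) : coeff i f * coeff j g = 0 := by
  have hnil : coeff i f * coeff j g ∈ nilradical R := by
    rw [nilradical_eq_sInf, Ideal.mem_sInf]
    rintro P (hP : P.IsPrime)
    exact coeff_mul_coeff_mem_of_mul_eq_zero h P i j
  exact (mem_nilradical.mp hnil).eq_zero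

theorem C_mul_eq_zero_iff {r : R} {f : R⟦X⟧} : C r * f = 0 ↔ ∀ n, r * coeff n f = 0 := by
  simp only [PowerSeries.ext_iff, coeff_C_mul, map_zero]

theorem mem_nonZeroDivisors_iff_of_isReduced [IsReduced R] {f : R⟦X⟧} :
    f ∈ R⟦X⟧⁰ ↔ ∀ r : R, C r * f = 0 → r = 0 := by
  refine ⟨fun hf r hr => ?_, fun h => mem_nonZeroDivisors_iff_right.mpr fun g hg => ?_⟩
  · simpa using congr(coeff 0 $(hf.2 _ hr))
  · ext j
    exact h _ (C_mul_eq_zero_iff.mpr fun n => coeff_mul_coeff_eq_zero_of_mul_eq_zero hg j n)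

end PowerSeries

theorem powerSeries_regular_iff_dense_content_general {R : Type*} [CommRing R]
    [IsReduced R] (f : PowerSeries R) :
    f ∈ nonZeroDivisors (PowerSeries R) ↔
      ∀ r : R, (∀ x ∈ Ideal.span (Set.range fun n => PowerSeries.coeff n f), r * x = 0)
        → r = 0 := by
  rw [PowerSeries.mem_nonZeroDivisors_iff_of_isReduced]
  refine forall_congr' fun r => imp_congr_left ?_
  refine Iff.trans ?_ Submodule.mem_annihilator
  simp [PowerSeries.C_mul_eq_zero_iff, Submodule.mem_annihilator_span]

theorem powerSeries_regular_iff_dense_content {R : Type*} [CommRing R] [Nontrivial R]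
    [IsReduced R] (f : PowerSeries R) :
    f ∈ nonZeroDivisors (PowerSeries R) ↔
      ∀ r : R, (∀ x ∈ Ideal.span (Set.range fun n => PowerSeries.coeff n f), r * x = 0)
        → r = 0 :=
  powerSeries_regular_iff_dense_content_general f
end

section
/- Let R be a reduced commutative ring and f, g ∈ R[[x]] with fg = 0. Then every coefficient of f annihilates every coefficient of g. -/
open PowerSeries

theorem PowerSeries.coeff_mem_of_map_mk_eq_zero {R : Type*} [CommRing R] {I : Ideal R}
    {f : PowerSeries R} (hf : map (Ideal.Quotient.mk I) f = 0) (n : ℕ) : coeff n f ∈ I := by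
  rw [← Ideal.Quotient.eq_zero_iff_mem, ← coeff_map, hf, map_zero]

/-- Modulo a prime `P` the power series ring is a domain, so one of `f`, `g` vanishes mod `P`. -/
theorem PowerSeries.coeff_mul_coeff_mem_of_mul_eq_zero_s18 {R : Type*} [CommRing R] (P : Ideal R)
    [P.IsPrime] {f g : PowerSeries R} (h : f * g = 0) (i j : ℕ) :
    coeff i f * coeff j g ∈ P := by
  have hmap : map (Ideal.Quotient.mk P) f * map (Ideal.Quotient.mk P) g = 0 := by
    rw [← map_mul, h, map_zero]
  rcases mul_eq_zero.mp hmap with hf | hg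
  · exact P.mul_mem_right _ (coeff_mem_of_map_mk_eq_zero hf i)
  · exact P.mul_mem_left _ (coeff_mem_of_map_mk_eq_zero hg j)

theorem PowerSeries.isNilpotent_coeff_mul_coeff_of_mul_eq_zero {R : Type*} [CommRing R]
    {f g : PowerSeries R} (h : f * g = 0) (i j : ℕ) : IsNilpotent (coeff i f * coeff j g) :=
  nilpotent_iff_mem_prime.mpr fun P _ => coeff_mul_coeff_mem_of_mul_eq_zero_s18 P h i j

theorem coeff_mul_coeff_eq_zero_of_mul_eq_zero_general {R : Type*} [CommRing R]
    [IsReduced R] (f g : PowerSeries R) (h : f * g = 0) :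
    ∀ i j : ℕ, PowerSeries.coeff i f * PowerSeries.coeff j g = 0 := fun i j =>
  (isNilpotent_coeff_mul_coeff_of_mul_eq_zero h i j).eq_zero

theorem coeff_mul_coeff_eq_zero_of_mul_eq_zero {R : Type*} [CommRing R] [Nontrivial R]
    [IsReduced R] (f g : PowerSeries R) (h : f * g = 0) :
    ∀ i j : ℕ, PowerSeries.coeff i f * PowerSeries.coeff j g = 0 :=
  coeff_mul_coeff_eq_zero_of_mul_eq_zero_general f g h
end

section
/- Let R be a commutative ring, and suppose a and b satisfy ab = 0 and a + b is aregular. Then for any aregular s ∈ R, a·(sb) = 0 and a + sb is aregular. -/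
/-!
Since `a * b = 0`, the product `(a + s * b) * (s * a + b)` equals `s * ((a + b) * (a + b))`,
a product of aregular elements. Aregular elements are closed under products, and a factor of
an aregular element is aregular, so `a + s * b` is aregular.
-/

def IsAregular {R : Type*} [MonoidWithZero R] (t : R) : Prop :=
  ∀ x : R, IsNilpotent (t * x) → IsNilpotent x

theorem IsAregular.mul {R : Type*} [MonoidWithZero R] {t u : R} (ht : IsAregular t)
    (hu : IsAregular u) : IsAregular (t * u) :=
  fun x hx => hu x (ht (u * x) (by rwa [← mul_assoc]))

theorem isAregular_of_mul_isAregular_left {R : Type*} [CommSemiring R] {t u : R}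
    (h : IsAregular (t * u)) : IsAregular t := fun x hx =>
  h x (by rw [mul_comm t, mul_assoc]; exact (Commute.all u _).isNilpotent_mul_left hx)

theorem add_mul_mul_add_of_mul_eq_zero {R : Type*} [CommRing R] {a b : R} (hab : a * b = 0)
    (s : R) : (a + s * b) * (s * a + b) = s * ((a + b) * (a + b)) := by
  linear_combination (1 - s) ^ 2 * hab

theorem rough_complement_smul_general {R : Type*} [CommRing R]
    (a b s : R) (hab : a * b = 0)
    (hsum : ∀ x : R, IsNilpotent ((a + b) * x) → IsNilpotent x)
    (hs : ∀ x : R, IsNilpotent (s * x) → IsNilpotent x) :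
    a * (s * b) = 0 ∧ ∀ x : R, IsNilpotent ((a + s * b) * x) → IsNilpotent x := by
  refine ⟨by linear_combination s * hab, ?_⟩
  have hprod : IsAregular ((a + s * b) * (s * a + b)) := by
    rw [add_mul_mul_add_of_mul_eq_zero hab]
    exact IsAregular.mul hs (IsAregular.mul hsum hsum)
  exact isAregular_of_mul_isAregular_left hprod

theorem rough_complement_smul {R : Type*} [CommRing R] [Nontrivial R]
    (a b s : R) (hab : a * b = 0)
    (hsum : ∀ x : R, IsNilpotent ((a + b) * x) → IsNilpotent x)
    (hs : ∀ x : R, IsNilpotent (s * x) → IsNilpotent x) :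
    a * (s * b) = 0 ∧ ∀ x : R, IsNilpotent ((a + s * b) * x) → IsNilpotent x :=
  rough_complement_smul_general a b s hab hsum hs
end
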